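/- Let G=(V,W) be a connected edge-weighted graph on n ≥ 3 vertices with Vol(V)=1, let 0 = λ_1 < λ_2 ≤ λ_3 ≤ ... ≤ λ_n be the eigenvalues of the normalized Laplacian L_D, and let u_2 be a unit-norm eigenvector belonging to λ_2. Suppose λ_2 = 1 − θ and λ_3 ≥ 1 − ε with 0 ≤ ε < θ < 1. Then the weighted 2-variance of the coordinates of D^{-1/2}u_2 satisfies S_2²(D^{-1/2}u_2) ≤ (1−θ)/(1−ε). -/

import Mathlib

open Finset Matrix

noncomputable section

/-- weighted cut between two vertex subsets: `w(X,Y) = ∑_{i∈X} ∑_{j∈Y} w_{ij}` -/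
def wcut {n : ℕ} (W : Matrix (Fin n) (Fin n) ℝ) (X Y : Finset (Fin n)) : ℝ :=
  ∑ i ∈ X, ∑ j ∈ Y, W i j

/-- generalized degree `d_i = ∑_j w_{ij}` -/
def gdeg {n : ℕ} (W : Matrix (Fin n) (Fin n) ℝ) (i : Fin n) : ℝ := ∑ j, W i j

/-- volume of a vertex subset: `Vol(U) = ∑_{i∈U} d_i` -/
def gvol {n : ℕ} (W : Matrix (Fin n) (Fin n) ℝ) (U : Finset (Fin n)) : ℝ :=
  ∑ i ∈ U, gdeg W i

/-- the normalized adjacency matrix `D^{-1/2} W D^{-1/2}` -/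
def normAdj {n : ℕ} (W : Matrix (Fin n) (Fin n) ℝ) : Matrix (Fin n) (Fin n) ℝ :=
  Matrix.of fun i j => W i j / (Real.sqrt (gdeg W i) * Real.sqrt (gdeg W j))

/-- the normalized Laplacian `L_D = I - D^{-1/2} W D^{-1/2}` -/
def normLap {n : ℕ} (W : Matrix (Fin n) (Fin n) ℝ) : Matrix (Fin n) (Fin n) ℝ :=
  1 - normAdj W

/-- the normalized modularity matrix `B_D = D^{-1/2} W D^{-1/2} - √d √dᵀ` -/
def modMat {n : ℕ} (W : Matrix (Fin n) (Fin n) ℝ) : Matrix (Fin n) (Fin n) ℝ :=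
  normAdj W - Matrix.of fun i j => Real.sqrt (gdeg W i) * Real.sqrt (gdeg W j)

/-- Euclidean inner product on `ℝ^n` -/
def dotR {n : ℕ} (u v : Fin n → ℝ) : ℝ := ∑ i, u i * v i

/-- a family of pairwise orthogonal unit-norm vectors of `ℝ^n` -/
def IsOrthonormalSys {m n : ℕ} (u : Fin m → Fin n → ℝ) : Prop :=
  ∀ i j, dotR (u i) (u j) = if i = j then 1 else 0

/-- spectral norm (largest singular value) of a real matrix -/
def specNorm {n : ℕ} (M : Matrix (Fin n) (Fin n) ℝ) : ℝ :=
  ‖Matrix.toEuclideanCLM (𝕜 := ℝ) M‖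

/-- connectivity of the weighted graph (irreducibility of `W`) -/
def gConnected {n : ℕ} (W : Matrix (Fin n) (Fin n) ℝ) : Prop :=
  (SimpleGraph.fromRel fun i j => W i j ≠ 0).Connected

/-- the `a`-th cluster of the partition encoded by `P : Fin n → Fin k` -/
def partSet {n k : ℕ} (P : Fin n → Fin k) (a : Fin k) : Finset (Fin n) :=
  univ.filter fun j => P j = a

/-- `(A,B)` is an `α`-volume regular pair:
for all `X ⊆ A`, `Y ⊆ B`, `|w(X,Y) - ρ(A,B) Vol(X) Vol(Y)| ≤ α √(Vol(A) Vol(B))`,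
where `ρ(A,B) = w(A,B)/(Vol(A) Vol(B))`. -/
def volReg {n : ℕ} (W : Matrix (Fin n) (Fin n) ℝ) (α : ℝ) (A B : Finset (Fin n)) : Prop :=
  ∀ X ⊆ A, ∀ Y ⊆ B,
    |wcut W X Y - wcut W A B / (gvol W A * gvol W B) * (gvol W X * gvol W Y)|
      ≤ α * Real.sqrt (gvol W A * gvol W B)

/-- isoperimetric number `h(G) = min_{U : Vol(U) ≤ 1/2} w(U, U̅)/Vol(U)` -/
def isoNum {n : ℕ} (W : Matrix (Fin n) (Fin n) ℝ) : ℝ :=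
  sInf {r | ∃ U : Finset (Fin n), U.Nonempty ∧ gvol W U ≤ 1/2 ∧ r = wcut W U Uᶜ / gvol W U}

/-- weighted cluster center of scalar vertex representatives -/
def sCenter {n k : ℕ} (d : Fin n → ℝ) (x : Fin n → ℝ) (P : Fin n → Fin k) (a : Fin k) : ℝ :=
  (∑ j ∈ partSet P a, d j)⁻¹ * ∑ j ∈ partSet P a, d j * x j

/-- weighted k-variance of scalar vertex representatives w.r.t. the partition `P` -/
def sVar {n k : ℕ} (d : Fin n → ℝ) (x : Fin n → ℝ) (P : Fin n → Fin k) : ℝ :=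
  ∑ a, ∑ j ∈ partSet P a, d j * (x j - sCenter d x P a) ^ 2

/-- minimum weighted 2-variance `S_2²` of scalar vertex representatives -/
def S2var {n : ℕ} (d : Fin n → ℝ) (x : Fin n → ℝ) : ℝ :=
  sInf {r | ∃ P : Fin n → Fin 2, Function.Surjective P ∧ r = sVar d x P}

/-- weighted cluster center of vector vertex representatives -/
def vCenter {n k m : ℕ} (d : Fin n → ℝ) (x : Fin n → Fin m → ℝ) (P : Fin n → Fin k) (a : Fin k) :
    Fin m → ℝ :=
  fun t => (∑ j ∈ partSet P a, d j)⁻¹ * ∑ j ∈ partSet P a, d j * x j t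

/-- weighted k-variance `S_k²(P, X)` of vector vertex representatives w.r.t. the partition `P` -/
def kVar {n k m : ℕ} (d : Fin n → ℝ) (x : Fin n → Fin m → ℝ) (P : Fin n → Fin k) : ℝ :=
  ∑ a, ∑ j ∈ partSet P a, d j * ∑ t, (x j t - vCenter d x P a t) ^ 2

/-- normalized k-way cut of the partition `P`  -/
def fkCut {n k : ℕ} (W : Matrix (Fin n) (Fin n) ℝ) (P : Fin n → Fin k) : ℝ :=
  ∑ a, ∑ b ∈ univ.filter (fun b => a < b),
    (1 / gvol W (partSet P a) + 1 / gvol W (partSet P b)) * wcut W (partSet P a) (partSet P b)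

/-- minimum normalized k-way cut `f_k(G)` (minimum over k-partitions with nonempty parts) -/
def fkMin {n : ℕ} (k : ℕ) (W : Matrix (Fin n) (Fin n) ℝ) : ℝ :=
  sInf {r | ∃ P : Fin n → Fin k, Function.Surjective P ∧ r = fkCut W P}

/-- normalized k-way Newman-Girvan modularity of the partition `P` -/
def QMod {n k : ℕ} (W : Matrix (Fin n) (Fin n) ℝ) (P : Fin n → Fin k) : ℝ :=
  ∑ a, (gvol W (partSet P a))⁻¹ *
    (∑ i ∈ partSet P a, ∑ j ∈ partSet P a, (W i j - gdeg W i * gdeg W j))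

/-- squared Euclidean distance of a vector from a linear subspace of `ℝ^n` -/
def distSqToSub {n : ℕ} (u : Fin n → ℝ) (F : Submodule ℝ (Fin n → ℝ)) : ℝ :=
  sInf {r | ∃ v ∈ F, r = dotR (u - v) (u - v)}

/-! Let `M = D^{-1/2} W D^{-1/2}`, `s = D^{1/2} 𝟙` (so `M s = s`) and `u = u₂` (so `M u = θ u`).
The spectral gap gives `y ⬝ M y ≤ (s ⬝ y)² + θ (u ⬝ y)² + ε (‖y‖² - (s ⬝ y)² - (u ⬝ y)²)` for
every `y`. Shift `z = u - m s` with the threshold `m` chosen so that `u ⬝ z⁺ = 1/2`, and apply the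
bound to `z⁺` and `z⁻`: since `M` has nonnegative entries, the cross terms `z⁺ ⬝ M z⁻` are
nonnegative, and the two bounds add up to `θ - ε ≤ 4 (1 - ε) (s ⬝ z⁺) (s ⬝ z⁻)`. The threshold
partition `{z > 0}`, `{z ≤ 0}`, of volumes `a` and `1 - a`, has 2-variance `1 - A² / (a (1 - a))`
with `A = (1 - a) (s ⬝ z⁺) + a (s ⬝ z⁻)`, and AM-GM turns the previous inequality into
`A² / (a (1 - a)) ≥ (θ - ε) / (1 - ε)`. -/

namespace IsOrthonormalSys

variable {n : ℕ} {u : Fin n → Fin n → ℝ}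

theorem dotProduct_self (hu : IsOrthonormalSys u) (i : Fin n) : u i ⬝ᵥ u i = 1 :=
  (hu i i).trans (if_pos rfl)

theorem sum_dotProduct_smul (hu : IsOrthonormalSys u) (y : Fin n → ℝ) :
    ∑ i, (u i ⬝ᵥ y) • u i = y := by
  have hrows : of u * (of u)ᵀ = 1 := by
    ext i j
    simpa [mul_apply, dotR, one_apply] using hu i j
  have hcols : (of u)ᵀ * of u = 1 := mul_eq_one_comm.mp hrows
  calc ∑ i, (u i ⬝ᵥ y) • u i = (of u)ᵀ *ᵥ (of u *ᵥ y) := by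
        ext b
        simp [mulVec, dotProduct, Finset.sum_apply, mul_comm]
    _ = y := by rw [mulVec_mulVec, hcols, one_mulVec]

theorem dotProduct_mulVec_eq_sum (hu : IsOrthonormalSys u) {M : Matrix (Fin n) (Fin n) ℝ}
    {μ : Fin n → ℝ} (hM : ∀ i, M *ᵥ u i = μ i • u i) (y : Fin n → ℝ) :
    y ⬝ᵥ (M *ᵥ y) = ∑ i, μ i * (u i ⬝ᵥ y) ^ 2 := by
  conv_lhs => arg 2; arg 2; rw [← hu.sum_dotProduct_smul y]
  simp only [mulVec_sum, mulVec_smul, hM, smul_smul, dotProduct_sum, dotProduct_smul,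
    smul_eq_mul]
  exact Finset.sum_congr rfl fun i _ => by rw [dotProduct_comm y]; ring

theorem sum_sq_dotProduct (hu : IsOrthonormalSys u) (y : Fin n → ℝ) :
    ∑ i, (u i ⬝ᵥ y) ^ 2 = y ⬝ᵥ y := by
  simpa using (hu.dotProduct_mulVec_eq_sum (M := 1) (μ := 1) (by simp) y).symm

theorem dotProduct_mulVec_le (hu : IsOrthonormalSys u) {M : Matrix (Fin n) (Fin n) ℝ}
    {μ : Fin n → ℝ} (hM : ∀ i, M *ᵥ u i = μ i • u i) {i₀ i₁ : Fin n} (h01 : i₀ ≠ i₁) {ε : ℝ}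
    (hε : ∀ i, i ≠ i₀ → i ≠ i₁ → μ i ≤ ε) (y : Fin n → ℝ) :
    y ⬝ᵥ (M *ᵥ y) ≤ μ i₀ * (u i₀ ⬝ᵥ y) ^ 2 + μ i₁ * (u i₁ ⬝ᵥ y) ^ 2
      + ε * (y ⬝ᵥ y - (u i₀ ⬝ᵥ y) ^ 2 - (u i₁ ⬝ᵥ y) ^ 2) := by
  set R := (univ.erase i₀).erase i₁
  have split (g : Fin n → ℝ) : ∑ i, g i = g i₀ + g i₁ + ∑ i ∈ R, g i := by
    rw [← Finset.add_sum_erase _ _ (mem_univ i₀),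
      ← Finset.add_sum_erase _ _ (mem_erase.mpr ⟨h01.symm, mem_univ i₁⟩), add_assoc]
  have hR : ∑ i ∈ R, μ i * (u i ⬝ᵥ y) ^ 2 ≤ ε * ∑ i ∈ R, (u i ⬝ᵥ y) ^ 2 := by
    rw [Finset.mul_sum]
    refine Finset.sum_le_sum fun i hi => ?_
    obtain ⟨hi₁, hi₀, -⟩ := mem_erase.mp hi |>.imp_right mem_erase.mp
    exact mul_le_mul_of_nonneg_right (hε i hi₀ hi₁) (sq_nonneg _)
  rw [hu.dotProduct_mulVec_eq_sum hM, ← hu.sum_sq_dotProduct, split, split]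
  linarith

theorem sq_dotProduct_eq_of_orthogonal (hu : IsOrthonormalSys u) {s : Fin n → ℝ}
    (hs : s ⬝ᵥ s = 1) {i₀ : Fin n} (hperp : ∀ i, i ≠ i₀ → u i ⬝ᵥ s = 0) (y : Fin n → ℝ) :
    (u i₀ ⬝ᵥ y) ^ 2 = (s ⬝ᵥ y) ^ 2 := by
  set c := u i₀ ⬝ᵥ s
  have hsc : s = c • u i₀ := by
    conv_lhs => rw [← hu.sum_dotProduct_smul s]
    exact Finset.sum_eq_single i₀ (fun i _ hi => by rw [hperp i hi, zero_smul])
      (fun h => (h (mem_univ i₀)).elim)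
  have hc : c ^ 2 = 1 := by
    rw [← hs, hsc, smul_dotProduct, dotProduct_smul, hu.dotProduct_self, smul_eq_mul,
      smul_eq_mul]
    ring
  rw [hsc, smul_dotProduct, smul_eq_mul, mul_pow, hc, one_mul]

end IsOrthonormalSys

theorem Matrix.IsSymm.dotProduct_eq_zero_of_mulVec_eq_smul {n : Type*} [Fintype n]
    {A : Matrix n n ℝ} (hA : A.IsSymm) {x y : n → ℝ} {a b : ℝ} (hx : A *ᵥ x = a • x)
    (hy : A *ᵥ y = b • y) (hab : a ≠ b) : x ⬝ᵥ y = 0 := by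
  have h : x ⬝ᵥ (A *ᵥ y) = (A *ᵥ x) ⬝ᵥ y := by
    rw [dotProduct_mulVec, ← mulVec_transpose, hA.eq]
  rw [hx, hy, dotProduct_smul, smul_dotProduct, smul_eq_mul, smul_eq_mul] at h
  exact (mul_eq_zero.mp (by linarith : (a - b) * (x ⬝ᵥ y) = 0)).resolve_left (sub_ne_zero.mpr hab)

section NormalizedAdjacency

variable {n : ℕ} {W : Matrix (Fin n) (Fin n) ℝ}

def sqrtDeg (W : Matrix (Fin n) (Fin n) ℝ) : Fin n → ℝ := fun i => Real.sqrt (gdeg W i)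

theorem sqrtDeg_pos (hd : ∀ i, 0 < gdeg W i) (i : Fin n) : 0 < sqrtDeg W i :=
  Real.sqrt_pos.mpr (hd i)

theorem sqrtDeg_mul_self (hd : ∀ i, 0 < gdeg W i) (i : Fin n) :
    sqrtDeg W i * sqrtDeg W i = gdeg W i :=
  Real.mul_self_sqrt (hd i).le

theorem sqrtDeg_dotProduct_self (hd : ∀ i, 0 < gdeg W i) :
    sqrtDeg W ⬝ᵥ sqrtDeg W = gvol W univ := by
  simp only [dotProduct, sqrtDeg_mul_self hd, gvol]

theorem normAdj_isSymm (hsym : W.IsSymm) : (normAdj W).IsSymm := by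
  ext i j
  simp only [normAdj, transpose_apply, of_apply, hsym.apply i j, mul_comm]

theorem normAdj_nonneg (hnn : ∀ i j, 0 ≤ W i j) (i j : Fin n) : 0 ≤ normAdj W i j :=
  div_nonneg (hnn i j) (by positivity)

theorem normAdj_mulVec_sqrtDeg (hd : ∀ i, 0 < gdeg W i) :
    normAdj W *ᵥ sqrtDeg W = sqrtDeg W := by
  ext i
  have hi := (sqrtDeg_pos hd i).ne'
  calc (normAdj W *ᵥ sqrtDeg W) i = (∑ j, W i j) / sqrtDeg W i := by
        simp only [mulVec, dotProduct, normAdj, of_apply, Finset.sum_div]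
        refine Finset.sum_congr rfl fun j _ => ?_
        have hj := (sqrtDeg_pos hd j).ne'
        simp only [sqrtDeg] at hi hj ⊢
        field_simp
    _ = sqrtDeg W i := by
        rw [div_eq_iff hi, ← gdeg, sqrtDeg_mul_self hd]

theorem normAdj_mulVec_of_normLap {v : Fin n → ℝ} {μ : ℝ} (h : normLap W *ᵥ v = μ • v) :
    normAdj W *ᵥ v = (1 - μ) • v := by
  rw [normLap, sub_mulVec, one_mulVec] at h
  rw [sub_smul, one_smul, ← h, sub_sub_cancel]

end NormalizedAdjacency

section Spectral

variable {n : ℕ} {W : Matrix (Fin n) (Fin n) ℝ}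

theorem sqrtDeg_dotProduct_eq_zero_of_normLap (hsym : W.IsSymm) (hd : ∀ i, 0 < gdeg W i)
    {v : Fin n → ℝ} {μ : ℝ} (h : normLap W *ᵥ v = μ • v) (hμ : μ ≠ 0) :
    sqrtDeg W ⬝ᵥ v = 0 :=
  (normAdj_isSymm hsym).dotProduct_eq_zero_of_mulVec_eq_smul
    (by rw [normAdj_mulVec_sqrtDeg hd, one_smul]) (normAdj_mulVec_of_normLap h)
    (by intro h1; exact hμ (by linarith))

theorem dotProduct_normAdj_mulVec_le (hsym : W.IsSymm) (hd : ∀ i, 0 < gdeg W i)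
    (hvol : gvol W univ = 1) {lam : Fin n → ℝ} {u : Fin n → Fin n → ℝ}
    (hortho : IsOrthonormalSys u) (heig : ∀ i, normLap W *ᵥ u i = lam i • u i)
    {i₀ i₁ : Fin n} (h01 : i₀ ≠ i₁) (h0 : lam i₀ = 0) (hpos : ∀ i, i ≠ i₀ → lam i ≠ 0) {ε : ℝ}
    (hε : ∀ i, i ≠ i₀ → i ≠ i₁ → 1 - ε ≤ lam i) (y : Fin n → ℝ) :
    y ⬝ᵥ (normAdj W *ᵥ y) ≤ (sqrtDeg W ⬝ᵥ y) ^ 2 + (1 - lam i₁) * (u i₁ ⬝ᵥ y) ^ 2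
      + ε * (y ⬝ᵥ y - (sqrtDeg W ⬝ᵥ y) ^ 2 - (u i₁ ⬝ᵥ y) ^ 2) := by
  have hu₀ : (u i₀ ⬝ᵥ y) ^ 2 = (sqrtDeg W ⬝ᵥ y) ^ 2 :=
    hortho.sq_dotProduct_eq_of_orthogonal (by rw [sqrtDeg_dotProduct_self hd, hvol])
      (fun i hi => by
        rw [dotProduct_comm]
        exact sqrtDeg_dotProduct_eq_zero_of_normLap hsym hd (heig i) (hpos i hi)) y
  have h := hortho.dotProduct_mulVec_le (fun i => normAdj_mulVec_of_normLap (heig i)) h01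
    (ε := ε) (fun i hi₀ hi₁ => by linarith [hε i hi₀ hi₁]) y
  rwa [h0, sub_zero, one_mul, hu₀] at h

end Spectral

section Threshold

variable {n : ℕ} {s u : Fin n → ℝ}

theorem posPart_dotProduct_negPart (z : Fin n → ℝ) : z⁺ ⬝ᵥ z⁻ = 0 :=
  Finset.sum_eq_zero fun j _ => by
    rcases le_total (z j) 0 with h | h
    · rw [Pi.posPart_apply, posPart_eq_zero.mpr h, zero_mul]
    · rw [Pi.negPart_apply, negPart_eq_zero.mpr h, mul_zero]

theorem posPart_dotProduct_self_add_negPart_dotProduct_self (z : Fin n → ℝ) :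
    z⁺ ⬝ᵥ z⁺ + z⁻ ⬝ᵥ z⁻ = z ⬝ᵥ z := by
  conv_rhs => rw [← posPart_sub_negPart z]
  rw [sub_dotProduct, dotProduct_sub, dotProduct_sub, dotProduct_comm z⁻ z⁺,
    posPart_dotProduct_negPart]
  ring

theorem dotProduct_mulVec_nonneg_of_nonneg {M : Matrix (Fin n) (Fin n) ℝ}
    (hM : ∀ i j, 0 ≤ M i j) {x y : Fin n → ℝ} (hx : 0 ≤ x) (hy : 0 ≤ y) :
    0 ≤ x ⬝ᵥ (M *ᵥ y) :=
  dotProduct_nonneg_of_nonneg hx fun i => dotProduct_nonneg_of_nonneg (hM i) hy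

theorem exists_dotProduct_posPart_eq_half (hs : ∀ j, 0 < s j) (hu : u ⬝ᵥ u = 1)
    (hsu : s ⬝ᵥ u = 0) : ∃ m : ℝ, u ⬝ᵥ (u - m • s)⁺ = 1 / 2 := by
  set Q : ℝ → ℝ := fun t => u ⬝ᵥ (u - t • s)⁺
  set B := ∑ j, |u j / s j|
  have hB (j : Fin n) : |u j / s j| ≤ B :=
    Finset.single_le_sum (f := fun j => |u j / s j|) (fun j _ => abs_nonneg _) (mem_univ j)
  have hQ_neg : Q (-B) = 1 := by
    have hpos : (u - (-B) • s)⁺ = u - (-B) • s := by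
      refine posPart_eq_self.mpr fun j => ?_
      have := (abs_le.mp (hB j)).1
      rw [neg_le, ← neg_div, div_le_iff₀ (hs j)] at this
      simp only [Pi.zero_apply, Pi.sub_apply, Pi.smul_apply, smul_eq_mul]
      linarith
    simp only [Q, hpos, dotProduct_sub, dotProduct_smul, dotProduct_comm u s, hsu, hu]
    simp
  have hQ_pos : Q B = 0 := by
    have hzero : (u - B • s)⁺ = 0 := by
      refine posPart_eq_zero.mpr fun j => ?_
      have := (abs_le.mp (hB j)).2
      rw [div_le_iff₀ (hs j)] at this
      simp only [Pi.zero_apply, Pi.sub_apply, Pi.smul_apply, smul_eq_mul]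
      linarith
    simp only [Q, hzero, dotProduct_zero]
  have hQc : Continuous Q := by
    simp only [Q, dotProduct, Pi.posPart_apply]
    fun_prop
  have hB0 : -B ≤ B := neg_le_self (Finset.sum_nonneg fun j _ => abs_nonneg _)
  obtain ⟨m, -, hm⟩ := intermediate_value_Icc' hB0 hQc.continuousOn
    (by rw [hQ_neg, hQ_pos]; norm_num : (1 / 2 : ℝ) ∈ Set.Icc (Q B) (Q (-B)))
  exact ⟨m, hm⟩

theorem sub_le_four_mul_dotProduct_posPart_negPart {M : Matrix (Fin n) (Fin n) ℝ}
    (hM : ∀ i j, 0 ≤ M i j) {θ ε : ℝ} (hMs : M *ᵥ s = s) (hMu : M *ᵥ u = θ • u)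
    (hquad : ∀ y, y ⬝ᵥ (M *ᵥ y) ≤ (s ⬝ᵥ y) ^ 2 + θ * (u ⬝ᵥ y) ^ 2
      + ε * (y ⬝ᵥ y - (s ⬝ᵥ y) ^ 2 - (u ⬝ᵥ y) ^ 2))
    (hs : s ⬝ᵥ s = 1) (hu : u ⬝ᵥ u = 1) (hsu : s ⬝ᵥ u = 0) {m : ℝ}
    (hm : u ⬝ᵥ (u - m • s)⁺ = 1 / 2) :
    θ - ε ≤ 4 * (1 - ε) * ((s ⬝ᵥ (u - m • s)⁺) * (s ⬝ᵥ (u - m • s)⁻)) := by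
  set z := u - m • s
  set f := z⁺
  set g := z⁻
  have hfg : f - g = z := posPart_sub_negPart z
  have hcross : 0 ≤ f ⬝ᵥ (M *ᵥ g) + g ⬝ᵥ (M *ᵥ f) :=
    add_nonneg (dotProduct_mulVec_nonneg_of_nonneg hM (posPart_nonneg z) (negPart_nonneg z))
      (dotProduct_mulVec_nonneg_of_nonneg hM (negPart_nonneg z) (posPart_nonneg z))
  have hxMz (x : Fin n → ℝ) : x ⬝ᵥ (M *ᵥ z) = θ * (u ⬝ᵥ x) - m * (s ⬝ᵥ x) := by
    rw [mulVec_sub, mulVec_smul, hMs, hMu, dotProduct_sub, dotProduct_smul, dotProduct_smul,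
      dotProduct_comm x u, dotProduct_comm x s, smul_eq_mul, smul_eq_mul]
  have hzs : s ⬝ᵥ z = -m := by
    simp only [z, dotProduct_sub, dotProduct_smul, hsu, hs, smul_eq_mul]; ring
  have hzu : u ⬝ᵥ z = 1 := by
    simp only [z, dotProduct_sub, dotProduct_smul, dotProduct_comm u s, hsu, hu, smul_eq_mul]
    ring
  have hnorm : f ⬝ᵥ f + g ⬝ᵥ g = 1 + m ^ 2 := by
    simp only [f, g, posPart_dotProduct_self_add_negPart_dotProduct_self, z, sub_dotProduct,
      dotProduct_sub, smul_dotProduct, dotProduct_smul, dotProduct_comm u s, hsu, hu, hs,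
      smul_eq_mul]
    ring
  have hgu : u ⬝ᵥ g = -(1 / 2) := by
    have : u ⬝ᵥ f - u ⬝ᵥ g = 1 := by rw [← dotProduct_sub, hfg, hzu]
    linarith
  have hpp : s ⬝ᵥ g = s ⬝ᵥ f + m := by
    have : s ⬝ᵥ f - s ⬝ᵥ g = -m := by rw [← dotProduct_sub, hfg, hzs]
    linarith
  have hfMf : f ⬝ᵥ (M *ᵥ f) = f ⬝ᵥ (M *ᵥ z) + f ⬝ᵥ (M *ᵥ g) := by
    rw [← dotProduct_add, ← mulVec_add, ← hfg, sub_add_cancel]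
  have hgMg : g ⬝ᵥ (M *ᵥ g) = g ⬝ᵥ (M *ᵥ f) - g ⬝ᵥ (M *ᵥ z) := by
    rw [← dotProduct_sub, ← mulVec_sub, ← hfg, sub_sub_cancel]
  have hf := hquad f
  have hg := hquad g
  rw [hfMf, hxMz, hm] at hf
  rw [hgMg, hxMz, hgu, hpp] at hg
  rw [hpp]
  linear_combination 2 * hf + 2 * hg + 2 * hcross + 2 * ε * hnorm

end Threshold

section Partition

theorem sum_mul_sub_weighted_mean_sq {ι : Type*} (S : Finset ι) (d x : ι → ℝ) :
    ∑ j ∈ S, d j * (x j - (∑ j ∈ S, d j)⁻¹ * ∑ j ∈ S, d j * x j) ^ 2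
      = ∑ j ∈ S, d j * x j ^ 2 - (∑ j ∈ S, d j * x j) ^ 2 / ∑ j ∈ S, d j := by
  set D := ∑ j ∈ S, d j
  set c := D⁻¹ * ∑ j ∈ S, d j * x j
  have hexp (j : ι) : d j * (x j - c) ^ 2 = d j * x j ^ 2 - 2 * c * (d j * x j) + c ^ 2 * d j := by
    ring
  rw [Finset.sum_congr rfl fun j _ => hexp j, Finset.sum_add_distrib, Finset.sum_sub_distrib,
    ← Finset.mul_sum, ← Finset.mul_sum]
  by_cases hD : D = 0
  · simp [c, hD]
  · simp only [c]
    field_simp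
    ring

variable {n : ℕ}

theorem sVar_eq {k : ℕ} (d x : Fin n → ℝ) (P : Fin n → Fin k) :
    sVar d x P = ∑ j, d j * x j ^ 2
      - ∑ a, (∑ j ∈ partSet P a, d j * x j) ^ 2 / ∑ j ∈ partSet P a, d j := by
  simp only [sVar, sCenter, sum_mul_sub_weighted_mean_sq, Finset.sum_sub_distrib, partSet,
    Finset.sum_fiberwise]

theorem S2var_le_sVar {d : Fin n → ℝ} (hd : ∀ j, 0 ≤ d j) (x : Fin n → ℝ) {P : Fin n → Fin 2}
    (hP : Function.Surjective P) : S2var d x ≤ sVar d x P := by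
  refine csInf_le ⟨0, ?_⟩ ⟨P, hP, rfl⟩
  rintro r ⟨Q, -, rfl⟩
  exact Finset.sum_nonneg fun a _ => Finset.sum_nonneg fun j _ =>
    mul_nonneg (hd j) (sq_nonneg _)

theorem le_sq_div_add_sq_div {a A m κ : ℝ} (ha : 0 < a) (ha1 : a < 1)
    (h : κ ≤ 4 * ((A - m * a) * (A + m * (1 - a)))) : κ ≤ A ^ 2 / a + A ^ 2 / (1 - a) := by
  have h1a : 0 < 1 - a := by linarith
  -- AM-GM, since `A = (1 - a) (A - m a) + a (A + m (1 - a))`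
  have hamgm : 4 * (a * (1 - a)) * ((A - m * a) * (A + m * (1 - a))) ≤ A ^ 2 := by
    nlinarith [sq_nonneg ((1 - a) * (A - m * a) - a * (A + m * (1 - a)))]
  rw [div_add_div _ _ ha.ne' h1a.ne', le_div_iff₀ (mul_pos ha h1a)]
  nlinarith [mul_pos ha h1a]

theorem sum_partSet_one {P : Fin n → Fin 2} (f : Fin n → ℝ) :
    ∑ j ∈ partSet P 1, f j = ∑ j, f j - ∑ j ∈ partSet P 0, f j := by
  rw [← Finset.sum_fiberwise univ P f, Fin.sum_univ_two]
  simp only [partSet]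
  ring

theorem sVar_sq_weights_eq {s u : Fin n → ℝ} (hs : ∀ j, 0 < s j) (hs1 : s ⬝ᵥ s = 1)
    (hu : u ⬝ᵥ u = 1) (hsu : s ⬝ᵥ u = 0) (P : Fin n → Fin 2) :
    sVar (fun j => s j ^ 2) (fun j => u j / s j) P
      = 1 - ((∑ j ∈ partSet P 0, s j * u j) ^ 2 / ∑ j ∈ partSet P 0, s j ^ 2
        + (∑ j ∈ partSet P 0, s j * u j) ^ 2 / (1 - ∑ j ∈ partSet P 0, s j ^ 2)) := by
  have hdx (j : Fin n) : s j ^ 2 * (u j / s j) = s j * u j := by field_simp [(hs j).ne']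
  have hdx2 (j : Fin n) : s j ^ 2 * (u j / s j) ^ 2 = u j * u j := by field_simp [(hs j).ne']
  have hs1' : ∑ j, s j ^ 2 = 1 := by simp only [← hs1, dotProduct, sq]
  rw [sVar_eq, Fin.sum_univ_two, sum_partSet_one, sum_partSet_one]
  simp only [hdx, hdx2, hs1']
  rw [show ∑ j, s j * u j = 0 from hsu, show ∑ j, u j * u j = 1 from hu, zero_sub, neg_sq]

theorem dotProduct_posPart_eq_sum_filter (s z : Fin n → ℝ) :
    s ⬝ᵥ z⁺ = ∑ j ∈ univ.filter fun j => 0 < z j, s j * z j := by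
  rw [Finset.sum_filter]
  refine Finset.sum_congr rfl fun j _ => ?_
  split_ifs with hj
  · rw [Pi.posPart_apply, posPart_eq_self.mpr hj.le]
  · rw [Pi.posPart_apply, posPart_eq_zero.mpr (not_lt.mp hj), mul_zero]

theorem nonempty_partSet_of_mul_pos {s u : Fin n → ℝ} (hs1 : s ⬝ᵥ s = 1) (hsu : s ⬝ᵥ u = 0)
    {P : Fin n → Fin 2} {m : ℝ}
    (h : 0 < (∑ j ∈ partSet P 0, s j * u j - m * ∑ j ∈ partSet P 0, s j ^ 2)
      * (∑ j ∈ partSet P 0, s j * u j + m * (1 - ∑ j ∈ partSet P 0, s j ^ 2))) (b : Fin 2) :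
    (partSet P b).Nonempty := by
  revert b
  refine Fin.forall_fin_two.mpr ⟨?_, ?_⟩ <;>
    rw [Finset.nonempty_iff_ne_empty] <;> intro hb
  · simp [hb] at h
  · have ha : ∑ j ∈ partSet P 1, s j ^ 2 = 0 := by rw [hb, Finset.sum_empty]
    have hA : ∑ j ∈ partSet P 1, s j * u j = 0 := by rw [hb, Finset.sum_empty]
    rw [sum_partSet_one, show ∑ j, s j ^ 2 = 1 by simp only [← hs1, dotProduct, sq]] at ha
    rw [sum_partSet_one, show ∑ j, s j * u j = 0 from hsu] at hA
    rw [show ∑ j ∈ partSet P 0, s j * u j = 0 by linarith,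
      show 1 - ∑ j ∈ partSet P 0, s j ^ 2 = 0 by linarith] at h
    simp at h

theorem S2var_le_of_le_four_mul {s u : Fin n → ℝ} (hs : ∀ j, 0 < s j) (hs1 : s ⬝ᵥ s = 1)
    (hu : u ⬝ᵥ u = 1) (hsu : s ⬝ᵥ u = 0) {κ m : ℝ} (hκ : 0 < κ)
    (h : κ ≤ 4 * ((s ⬝ᵥ (u - m • s)⁺) * (s ⬝ᵥ (u - m • s)⁻))) :
    S2var (fun j => s j ^ 2) (fun j => u j / s j) ≤ 1 - κ := by
  set z := u - m • s
  set P : Fin n → Fin 2 := fun j => if 0 < z j then 0 else 1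
  set a := ∑ j ∈ partSet P 0, s j ^ 2
  set A := ∑ j ∈ partSet P 0, s j * u j
  have hpos : s ⬝ᵥ z⁺ = A - m * a := by
    rw [dotProduct_posPart_eq_sum_filter,
      show univ.filter (fun j => 0 < z j) = partSet P 0 by ext j; simp [partSet, P]]
    simp only [z, A, a, Pi.sub_apply, Pi.smul_apply, smul_eq_mul, Finset.mul_sum,
      ← Finset.sum_sub_distrib]
    exact Finset.sum_congr rfl fun j _ => by ring
  have hneg : s ⬝ᵥ z⁻ = A + m * (1 - a) := by
    have hsz : s ⬝ᵥ z = -m := by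
      simp only [z, dotProduct_sub, dotProduct_smul, hsu, hs1, smul_eq_mul]; ring
    rw [← posPart_sub_negPart z, dotProduct_sub] at hsz
    linarith
  rw [hpos, hneg] at h
  have hne := nonempty_partSet_of_mul_pos hs1 hsu (m := m) (by linarith)
  have hP : Function.Surjective P := fun b => by
    obtain ⟨j, hj⟩ := hne b
    exact ⟨j, (mem_filter.mp hj).2⟩
  have ha0 : 0 < a := Finset.sum_pos (fun j _ => pow_pos (hs j) 2) (hne 0)
  have ha1 : a < 1 := by
    have := Finset.sum_pos (fun j _ => pow_pos (hs j) 2) (hne 1)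
    rw [sum_partSet_one, show ∑ j, s j ^ 2 = 1 by simp only [← hs1, dotProduct, sq]] at this
    linarith
  calc S2var (fun j => s j ^ 2) (fun j => u j / s j)
      ≤ sVar (fun j => s j ^ 2) (fun j => u j / s j) P := S2var_le_sVar (fun j => sq_nonneg _) _ hP
    _ = 1 - (A ^ 2 / a + A ^ 2 / (1 - a)) := sVar_sq_weights_eq hs hs1 hu hsu P
    _ ≤ 1 - κ := by linarith [le_sq_div_add_sq_div ha0 ha1 h]

end Partition

/-- if `λ₂ = 1 - θ` and `λ₃ ≥ 1 - ε` with `0 ≤ ε < θ < 1`, then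
`S_2²(D^{-1/2} u₂) ≤ (1-θ)/(1-ε)`. -/
theorem statement19 {n : ℕ} (hn : 3 ≤ n) (W : Matrix (Fin n) (Fin n) ℝ)
    (hsym : W.IsSymm) (hnn : ∀ i j, 0 ≤ W i j)
    (hd : ∀ i, 0 < gdeg W i) (hvol : gvol W Finset.univ = 1)
    (lam : Fin n → ℝ) (u : Fin n → Fin n → ℝ) (θ ε : ℝ)
    (hmono : Monotone lam)
    (hortho : IsOrthonormalSys u)
    (heig : ∀ i, normLap W *ᵥ u i = lam i • u i)
    (h0 : lam ⟨0, by omega⟩ = 0)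
    (hpos : 0 < lam ⟨1, by omega⟩)
    (hθ : lam ⟨1, by omega⟩ = 1 - θ)
    (hε : 1 - ε ≤ lam ⟨2, by omega⟩)
    (hεθ : ε < θ) (hθ1 : θ < 1) :
    S2var (gdeg W) (fun j => u ⟨1, by omega⟩ j / Real.sqrt (gdeg W j))
      ≤ (1 - θ) / (1 - ε) := by
  set i₁ : Fin n := ⟨1, by omega⟩
  have hlam_ne (i : Fin n) (hi : i ≠ ⟨0, by omega⟩) : lam i ≠ 0 :=
    (hpos.trans_le (hmono (Fin.le_def.mpr (by simp [i₁, Fin.ext_iff] at hi ⊢; omega)))).ne'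
  have hlam_ge (i : Fin n) (hi₀ : i ≠ ⟨0, by omega⟩) (hi₁ : i ≠ i₁) : 1 - ε ≤ lam i :=
    hε.trans (hmono (Fin.le_def.mpr (by simp [i₁, Fin.ext_iff] at hi₀ hi₁ ⊢; omega)))
  have hquad := dotProduct_normAdj_mulVec_le hsym hd hvol hortho heig
    (by simp [i₁, Fin.ext_iff]) h0 hlam_ne hlam_ge
  have hs : sqrtDeg W ⬝ᵥ sqrtDeg W = 1 := by rw [sqrtDeg_dotProduct_self hd, hvol]
  have hu := hortho.dotProduct_self i₁
  have hsu := sqrtDeg_dotProduct_eq_zero_of_normLap hsym hd (heig i₁) hpos.ne'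
  obtain ⟨m, hm⟩ := exists_dotProduct_posPart_eq_half (sqrtDeg_pos hd) hu hsu
  have hgap := sub_le_four_mul_dotProduct_posPart_negPart (normAdj_nonneg hnn)
    (normAdj_mulVec_sqrtDeg hd) (by rw [normAdj_mulVec_of_normLap (heig i₁), hθ, sub_sub_cancel])
    (by simpa [hθ] using hquad) hs hu hsu hm
  have hε1 : 0 < 1 - ε := by linarith
  have hS := S2var_le_of_le_four_mul (sqrtDeg_pos hd) hs hu hsu (div_pos (sub_pos.mpr hεθ) hε1)
    (by rwa [div_le_iff₀ hε1, mul_comm, ← mul_assoc, mul_comm _ 4])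
  rw [show (fun j => sqrtDeg W j ^ 2) = gdeg W from funext fun j => Real.sq_sqrt (hd j).le] at hS
  refine hS.trans_eq ?_
  field_simp
  ring

end
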